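/- Let A, C be positive semidefinite matrices and B a rectangular matrix such that (A B; B† C) ≥ 0. If Tr(A) ≤ a and Tr(C) ≤ c, then Tr|B| ≤ √(ac), where Tr|B| is the trace norm of B. In particular, taking A = Σ-weighted residuals and B the Gram block Ψ_i†Ψ_j of vectors generating ρ̃_i and ρ̃_j, one obtains Σ_k(q_{ik} − γ_{ik}) · Σ_l(q_{jl} − γ_{jl}) ≥ F²(ρ̃_i, ρ̃_j) whenever X̃ − Γ̃ ≥ 0 with Γ̃ block diagonal. -/

import Mathlib

/-!
Diagonalize `Bᴴ B = V diag(λ) Vᴴ`. The columns of `B V` are orthogonal with squared norms `λ`, so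
rescaling them by `(√λ)⁻¹` gives a partial isometry `U` with `Uᴴ B V = diag(√λ)`, hence
`Tr|B| = Re Tr(Uᴴ B V)`. Compressing the positive block matrix by `(t U, V)` for real `t` gives a
nonnegative quadratic in `t`, whence `(Tr|B|)² ≤ Tr(Uᴴ A U) Tr(Vᴴ C V) ≤ Tr A · Tr C`, the last step
because `U Uᴴ` is a projection and `V` is unitary.

The same `U` gives `Tr|Z| ≤ Tr|Zᴴ|`: `√(Z Zᴴ)` multiplies the columns of `Z V` by `√λ`, so
`Uᴴ √(Z Zᴴ) U = diag(√λ)`. For `ρ = P Pᴴ`, `σ = Q Qᴴ` and `Y = √σ P` one has `√σ ρ √σ = Y Yᴴ` and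
`Yᴴ Y = (Pᴴ Q)(Pᴴ Q)ᴴ`, so `F(ρ, σ) = Tr|Pᴴ Q|`. When the columns of `P` and `Q` are the vectors
`ψ̃_i` and `ψ̃_j`, `Pᴴ Q` is the `(i, j)` block of `X̃ - Γ̃`, because `Γ̃` is block diagonal.
-/

open Matrix BigOperators ComplexOrder
open scoped Classical

/-- The positive semidefinite square root of a matrix (0 if the matrix is not PSD). -/
noncomputable def msqrt {n : ℕ} (A : Matrix (Fin n) (Fin n) ℂ) : Matrix (Fin n) (Fin n) ℂ :=
  if h : A.PosSemidef then
    (h.1.eigenvectorUnitary : Matrix (Fin n) (Fin n) ℂ) *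
      diagonal ((↑) ∘ (√·) ∘ h.1.eigenvalues) *
      (star h.1.eigenvectorUnitary : Matrix (Fin n) (Fin n) ℂ) else 0

/-- Fidelity of two positive semidefinite matrices: `F(ρ,σ) = Tr √(√σ ρ √σ)`. -/
noncomputable def fidelity {n : ℕ} (ρ σ : Matrix (Fin n) (Fin n) ℂ) : ℝ :=
  (msqrt (msqrt σ * ρ * msqrt σ)).trace.re

namespace Matrix

variable {𝕜 : Type*} [RCLike 𝕜] {m n p r : Type*} [Fintype m] [Fintype n] [Fintype p] [Fintype r]

lemma PosSemidef.re_trace_nonneg {A : Matrix n n 𝕜} (hA : A.PosSemidef) :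
    0 ≤ RCLike.re A.trace :=
  (RCLike.nonneg_iff.mp hA.trace_nonneg).1

theorem PosSemidef.re_trace_mul_sq_le_of_fromBlocks {A : Matrix p p 𝕜} {B : Matrix p r 𝕜}
    {C : Matrix r r 𝕜} (h : (fromBlocks A B Bᴴ C).PosSemidef) (U : Matrix p m 𝕜)
    (V : Matrix r m 𝕜) :
    RCLike.re (Uᴴ * B * V).trace ^ 2 ≤
      RCLike.re (Uᴴ * A * U).trace * RCLike.re (Vᴴ * C * V).trace := by
  have hquad : ∀ t : ℝ, 0 ≤ RCLike.re (Uᴴ * A * U).trace * (t * t) +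
      2 * RCLike.re (Uᴴ * B * V).trace * t + RCLike.re (Vᴴ * C * V).trace := by
    intro t
    have ht := (h.conjTranspose_mul_mul_same (fromRows ((t : 𝕜) • U) V)).re_trace_nonneg
    have hexpand : (fromRows ((t : 𝕜) • U) V)ᴴ * fromBlocks A B Bᴴ C * fromRows ((t : 𝕜) • U) V
        = ((t : 𝕜) * t) • (Uᴴ * A * U) + (t : 𝕜) • (Uᴴ * B * V) + (t : 𝕜) • (Uᴴ * B * V)ᴴ
          + Vᴴ * C * V := by
      simp only [conjTranspose_fromRows_eq_fromCols_conjTranspose, fromBlocks_mul_fromRows,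
        fromCols_mul_fromRows, conjTranspose_smul, conjTranspose_mul, conjTranspose_conjTranspose,
        RCLike.star_def, RCLike.conj_ofReal, Matrix.mul_add, Matrix.mul_smul, Matrix.smul_mul,
        smul_smul, Matrix.mul_assoc]
      abel
    rw [hexpand] at ht
    simp only [trace_add, trace_smul, trace_conjTranspose, map_add, smul_eq_mul,
      ← RCLike.ofReal_mul, RCLike.re_ofReal_mul, RCLike.star_def, RCLike.conj_re] at ht
    linarith
  have hd := discrim_le_zero hquad
  rw [discrim] at hd
  nlinarith

theorem PosSemidef.re_trace_conjTranspose_mul_mul_le [DecidableEq p] {A : Matrix p p 𝕜}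
    (hA : A.PosSemidef) {U : Matrix p m 𝕜} (hU : U * (Uᴴ * U) = U) :
    RCLike.re (Uᴴ * A * U).trace ≤ RCLike.re A.trace := by
  set Q := U * Uᴴ
  have hQQ : (1 - Q) * (1 - Q) = 1 - Q := by
    have : Q * Q = Q := by rw [← Matrix.mul_assoc, Matrix.mul_assoc U, hU]
    rw [sub_mul, mul_sub, mul_sub, this]; simp
  have hQH : (1 - Q)ᴴ = 1 - Q := by simp [Q, conjTranspose_sub]
  have hrest := (hA.conjTranspose_mul_mul_same (1 - Q)).re_trace_nonneg
  have htrace : ((1 - Q)ᴴ * A * (1 - Q)).trace = A.trace - (Uᴴ * A * U).trace := by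
    rw [hQH, trace_mul_cycle, hQQ, sub_mul, Matrix.one_mul, trace_sub, Matrix.mul_assoc,
      trace_mul_comm U]
  rw [htrace, map_sub] at hrest
  linarith

private lemma ofReal_eq_sqrt_sq {x : ℝ} (hx : 0 ≤ x) : (x : 𝕜) = (√x : 𝕜) ^ 2 := by
  rw [← RCLike.ofReal_pow, Real.sq_sqrt hx]

section colNormalize

variable [DecidableEq r]

/-- Column `k` becomes `0` when `d k = 0`, since `(√0)⁻¹ = 0`. -/
noncomputable def colNormalize (W : Matrix p r 𝕜) (d : r → ℝ) : Matrix p r 𝕜 :=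
  W * diagonal fun k => ((√(d k) : ℝ) : 𝕜)⁻¹

variable {W : Matrix p r 𝕜} {d : r → ℝ}

lemma colNormalize_mul_conjTranspose_mul_self (hd : 0 ≤ d)
    (hW : Wᴴ * W = diagonal fun k => (d k : 𝕜)) :
    colNormalize W d * ((colNormalize W d)ᴴ * colNormalize W d) = colNormalize W d := by
  simp only [colNormalize, conjTranspose_mul, diagonal_conjTranspose, Matrix.mul_assoc]
  rw [← Matrix.mul_assoc Wᴴ, hW]
  simp only [diagonal_mul_diagonal]
  congr 2
  funext k
  simp only [Pi.star_apply, RCLike.star_def, map_inv₀, RCLike.conj_ofReal, ofReal_eq_sqrt_sq (hd k)]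
  rcases eq_or_ne (√(d k) : 𝕜) 0 with h0 | h0
  · simp [h0]
  · field_simp

lemma conjTranspose_colNormalize_mul (hd : 0 ≤ d) (hW : Wᴴ * W = diagonal fun k => (d k : 𝕜)) :
    (colNormalize W d)ᴴ * W = diagonal fun k => (√(d k) : 𝕜) := by
  simp only [colNormalize, conjTranspose_mul, diagonal_conjTranspose, Matrix.mul_assoc, hW,
    diagonal_mul_diagonal]
  congr 1
  funext k
  simp only [Pi.star_apply, RCLike.star_def, map_inv₀, RCLike.conj_ofReal, ofReal_eq_sqrt_sq (hd k)]
  rcases eq_or_ne (√(d k) : 𝕜) 0 with h0 | h0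
  · simp [h0]
  · field_simp

lemma conjTranspose_colNormalize_mul_mul_colNormalize (hd : 0 ≤ d)
    (hW : Wᴴ * W = diagonal fun k => (d k : 𝕜)) {S : Matrix p p 𝕜}
    (hSW : S * W = W * diagonal fun k => (√(d k) : 𝕜)) :
    (colNormalize W d)ᴴ * S * colNormalize W d = diagonal fun k => (√(d k) : 𝕜) :=
  calc (colNormalize W d)ᴴ * S * colNormalize W d
      = (colNormalize W d)ᴴ * (S * W) * diagonal fun k => ((√(d k) : ℝ) : 𝕜)⁻¹ := by
        simp only [colNormalize, Matrix.mul_assoc]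
    _ = _ := by
        rw [hSW, ← Matrix.mul_assoc, conjTranspose_colNormalize_mul hd hW, diagonal_mul_diagonal,
          diagonal_mul_diagonal]
        simp only [mul_self_mul_inv]

end colNormalize

lemma PosSemidef.mulVec_eq_sqrt_smul_of_mul_self_eq {S M : Matrix n n 𝕜} (hS : S.PosSemidef)
    (hSM : S * S = M) {x : n → 𝕜} {μ : ℝ} (hμ : 0 ≤ μ) (hx : M *ᵥ x = (μ : 𝕜) • x) :
    S *ᵥ x = (√μ : 𝕜) • x := by
  set y := S *ᵥ x - (√μ : 𝕜) • x
  have hSy : S *ᵥ y = -((√μ : 𝕜) • y) := by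
    have hμ' : (μ : 𝕜) = (√μ : 𝕜) * √μ := by rw [← RCLike.ofReal_mul, Real.mul_self_sqrt hμ]
    simp only [y, mulVec_sub, mulVec_smul, mulVec_mulVec, hSM, hx, hμ', smul_sub, smul_smul]
    abel
  suffices hy : y = 0 from sub_eq_zero.mp hy
  rcases hμ.eq_or_lt with rfl | hpos
  · have hy : y = S *ᵥ x := by simp [y]
    rw [← dotProduct_star_self_eq_zero]
    calc star y ⬝ᵥ y = star x ⬝ᵥ (M *ᵥ x) := by
          rw [hy, star_mulVec, ← dotProduct_mulVec, mulVec_mulVec, hS.1.eq, hSM]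
      _ = 0 := by simp [hx]
  · have hquad := hS.re_dotProduct_nonneg y
    rw [hSy, dotProduct_neg, dotProduct_smul, smul_eq_mul, map_neg, RCLike.re_ofReal_mul] at hquad
    have hnorm := RCLike.nonneg_iff.mp (dotProduct_star_self_nonneg y)
    have hsqrt := Real.sqrt_pos.2 hpos
    refine dotProduct_star_self_eq_zero.mp (RCLike.ext ?_ (by simp [hnorm.2]))
    rw [map_zero]
    nlinarith

lemma PosSemidef.mul_eq_mul_diagonal_sqrt_of_mul_self_eq [DecidableEq r] {S M : Matrix n n 𝕜}
    (hS : S.PosSemidef) (hSM : S * S = M) {X : Matrix n r 𝕜} {d : r → ℝ} (hd : 0 ≤ d)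
    (hX : M * X = X * diagonal fun k => (d k : 𝕜)) :
    S * X = X * diagonal fun k => (√(d k) : 𝕜) := by
  ext i k
  have hcol : M *ᵥ (fun i => X i k) = (d k : 𝕜) • fun i => X i k := by
    funext i
    have := congrFun (congrFun hX i) k
    rw [mul_diagonal] at this
    simpa [mulVec, dotProduct, mul_apply, mul_comm] using this
  rw [mul_diagonal]
  simpa [mulVec, dotProduct, mul_apply, mul_comm] using
    congrFun (hS.mulVec_eq_sqrt_smul_of_mul_self_eq hSM (hd k) hcol) i

lemma IsHermitian.mul_eigenvectorUnitary [DecidableEq n] {A : Matrix n n 𝕜} (hA : A.IsHermitian) :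
    A * (hA.eigenvectorUnitary : Matrix n n 𝕜) =
      (hA.eigenvectorUnitary : Matrix n n 𝕜) * diagonal (RCLike.ofReal ∘ hA.eigenvalues) := by
  nth_rw 1 [hA.spectral_theorem]
  rw [Unitary.conjStarAlgAut_apply, Matrix.mul_assoc, Unitary.coe_star_mul_self, Matrix.mul_one]

lemma conjTranspose_mul_self_mul_eigenvectorUnitary [DecidableEq n] (Z : Matrix m n 𝕜) :
    let hZ := (posSemidef_conjTranspose_mul_self Z).1
    (Z * (hZ.eigenvectorUnitary : Matrix n n 𝕜))ᴴ * (Z * (hZ.eigenvectorUnitary : Matrix n n 𝕜)) =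
      diagonal (RCLike.ofReal ∘ hZ.eigenvalues) := by
  intro hZ
  rw [conjTranspose_mul, Matrix.mul_assoc, ← Matrix.mul_assoc Zᴴ, hZ.mul_eigenvectorUnitary,
    ← Matrix.mul_assoc, ← star_eq_conjTranspose, Unitary.coe_star_mul_self, Matrix.one_mul]

end Matrix

lemma Matrix.PosSemidef.fromBlocks_submatrix {𝕜 : Type*} [RCLike 𝕜] {ι p r : Type*}
    {M : Matrix ι ι 𝕜} (hM : M.PosSemidef) (e₁ : p → ι) (e₂ : r → ι) :
    (fromBlocks (M.submatrix e₁ e₁) (M.submatrix e₁ e₂) (M.submatrix e₁ e₂)ᴴ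
      (M.submatrix e₂ e₂)).PosSemidef := by
  convert hM.submatrix (Sum.elim e₁ e₂) using 1
  ext (k | k) (l | l) <;> simp [hM.1.apply]

lemma Matrix.sum_vecMulVec_star_eq {α : Type*} [CommSemiring α] [StarRing α] {m n : Type*}
    [Fintype m] (v : m → n → α) :
    ∑ k, vecMulVec (v k) (star (v k)) = (of v)ᵀ * ((of v)ᵀ)ᴴ := by
  ext x y
  simp [sum_apply, vecMulVec_apply, mul_apply]

lemma Matrix.conjTranspose_transpose_of_mul_transpose_of {α : Type*} [CommSemiring α]
    [StarRing α] {l m n : Type*} [Fintype n] (u : l → n → α) (v : m → n → α) :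
    ((of u)ᵀ)ᴴ * (of v)ᵀ = of fun k k' => star (u k) ⬝ᵥ v k' := by
  ext k k'
  simp [mul_apply, dotProduct]

section msqrt

variable {n : ℕ} {M : Matrix (Fin n) (Fin n) ℂ}

lemma msqrt_of_posSemidef (hM : M.PosSemidef) :
    msqrt M = (hM.1.eigenvectorUnitary : Matrix (Fin n) (Fin n) ℂ) *
      diagonal ((↑) ∘ (√·) ∘ hM.1.eigenvalues) *
      (star hM.1.eigenvectorUnitary : Matrix (Fin n) (Fin n) ℂ) :=
  dif_pos hM

lemma posSemidef_msqrt (hM : M.PosSemidef) : (msqrt M).PosSemidef := by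
  rw [msqrt_of_posSemidef hM, star_eq_conjTranspose]
  refine PosSemidef.mul_mul_conjTranspose_same (posSemidef_diagonal_iff.mpr fun i => ?_) _
  simp [Complex.zero_le_real, Real.sqrt_nonneg]

lemma msqrt_mul_self (hM : M.PosSemidef) : msqrt M * msqrt M = M := by
  conv_rhs => rw [hM.1.spectral_theorem, Unitary.conjStarAlgAut_apply]
  rw [msqrt_of_posSemidef hM]
  simp only [Matrix.mul_assoc]
  rw [← Matrix.mul_assoc (star _) (hM.1.eigenvectorUnitary : Matrix (Fin n) (Fin n) ℂ),
    Unitary.coe_star_mul_self, Matrix.one_mul, ← Matrix.mul_assoc (diagonal _),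
    diagonal_mul_diagonal]
  congr 3
  funext i
  simp only [Function.comp_apply, ← Complex.ofReal_mul,
    Real.mul_self_sqrt (hM.eigenvalues_nonneg i)]
  rfl

lemma trace_msqrt (hM : M.PosSemidef) : (msqrt M).trace = ∑ k, (√(hM.1.eigenvalues k) : ℂ) := by
  rw [msqrt_of_posSemidef hM, trace_mul_cycle, Unitary.coe_star_mul_self, Matrix.one_mul,
    trace_diagonal]
  rfl

end msqrt

noncomputable def traceNorm {p r : ℕ} (Z : Matrix (Fin p) (Fin r) ℂ) : ℝ :=
  (msqrt (Zᴴ * Z)).trace.re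

section traceNorm

variable {p r : ℕ}

lemma traceNorm_eq_sum_sqrt_eigenvalues (Z : Matrix (Fin p) (Fin r) ℂ) :
    traceNorm Z = ∑ k, √((posSemidef_conjTranspose_mul_self Z).1.eigenvalues k) := by
  rw [traceNorm, trace_msqrt (posSemidef_conjTranspose_mul_self Z), Complex.re_sum]
  simp

lemma traceNorm_le_traceNorm_conjTranspose (Z : Matrix (Fin p) (Fin r) ℂ) :
    traceNorm Z ≤ traceNorm Zᴴ := by
  set hZ := (posSemidef_conjTranspose_mul_self Z).1
  set W := Z * (hZ.eigenvectorUnitary : Matrix (Fin r) (Fin r) ℂ)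
  set d := hZ.eigenvalues
  have hd : 0 ≤ d := (posSemidef_conjTranspose_mul_self Z).eigenvalues_nonneg
  have hW : Wᴴ * W = diagonal fun k => (d k : ℂ) := Z.conjTranspose_mul_self_mul_eigenvectorUnitary
  have hS := posSemidef_self_mul_conjTranspose Z
  have hSW : msqrt (Z * Zᴴ) * W = W * diagonal fun k => (√(d k) : ℂ) := by
    refine (posSemidef_msqrt hS).mul_eq_mul_diagonal_sqrt_of_mul_self_eq (msqrt_mul_self hS) hd ?_
    rw [Matrix.mul_assoc, ← Matrix.mul_assoc Zᴴ, hZ.mul_eigenvectorUnitary, ← Matrix.mul_assoc]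
    rfl
  have hUSU := conjTranspose_colNormalize_mul_mul_colNormalize hd hW hSW
  have := (posSemidef_msqrt hS).re_trace_conjTranspose_mul_mul_le
    (colNormalize_mul_conjTranspose_mul_self hd hW)
  rw [hUSU, trace_diagonal] at this
  rw [traceNorm_eq_sum_sqrt_eigenvalues, traceNorm, conjTranspose_conjTranspose]
  simpa using this

lemma traceNorm_conjTranspose (Z : Matrix (Fin p) (Fin r) ℂ) : traceNorm Zᴴ = traceNorm Z :=
  le_antisymm (by simpa using traceNorm_le_traceNorm_conjTranspose Zᴴ)
    (traceNorm_le_traceNorm_conjTranspose Z)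

theorem traceNorm_sq_le_of_fromBlocks {A : Matrix (Fin p) (Fin p) ℂ} {B : Matrix (Fin p) (Fin r) ℂ}
    {C : Matrix (Fin r) (Fin r) ℂ} (h : (fromBlocks A B Bᴴ C).PosSemidef) :
    traceNorm B ^ 2 ≤ A.trace.re * C.trace.re := by
  set hB := (posSemidef_conjTranspose_mul_self B).1
  set V := (hB.eigenvectorUnitary : Matrix (Fin r) (Fin r) ℂ)
  set d := hB.eigenvalues
  have hd : 0 ≤ d := (posSemidef_conjTranspose_mul_self B).eigenvalues_nonneg
  have hW : (B * V)ᴴ * (B * V) = diagonal fun k => (d k : ℂ) :=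
    B.conjTranspose_mul_self_mul_eigenvectorUnitary
  have hA : A.PosSemidef := h.submatrix Sum.inl
  have hC : C.PosSemidef := h.submatrix Sum.inr
  have hnorm : traceNorm B = RCLike.re ((colNormalize (B * V) d)ᴴ * B * V).trace := by
    rw [Matrix.mul_assoc, conjTranspose_colNormalize_mul hd hW, trace_diagonal,
      traceNorm_eq_sum_sqrt_eigenvalues]
    simp [d]
  have hVCV : (Vᴴ * C * V).trace = C.trace := by
    rw [trace_mul_cycle, ← star_eq_conjTranspose,
      Unitary.mul_star_self_of_mem hB.eigenvectorUnitary.2, Matrix.one_mul]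
  have hUAU := hA.re_trace_conjTranspose_mul_mul_le (colNormalize_mul_conjTranspose_mul_self hd hW)
  calc traceNorm B ^ 2
      ≤ RCLike.re ((colNormalize (B * V) d)ᴴ * A * colNormalize (B * V) d).trace *
          RCLike.re (Vᴴ * C * V).trace :=
        hnorm ▸ h.re_trace_mul_sq_le_of_fromBlocks _ _
    _ ≤ A.trace.re * C.trace.re := by
        rw [hVCV]
        exact mul_le_mul_of_nonneg_right hUAU hC.re_trace_nonneg

theorem traceNorm_le_sqrt_of_fromBlocks {A : Matrix (Fin p) (Fin p) ℂ}
    {B : Matrix (Fin p) (Fin r) ℂ} {C : Matrix (Fin r) (Fin r) ℂ}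
    (h : (fromBlocks A B Bᴴ C).PosSemidef) {a c : ℝ} (ha : A.trace.re ≤ a) (hc : C.trace.re ≤ c) :
    traceNorm B ≤ √(a * c) := by
  have hA : 0 ≤ A.trace.re := (h.submatrix Sum.inl).re_trace_nonneg
  have hC : 0 ≤ C.trace.re := (h.submatrix Sum.inr).re_trace_nonneg
  exact (le_abs_self _).trans <| Real.abs_le_sqrt <|
    (traceNorm_sq_le_of_fromBlocks h).trans (mul_le_mul ha hc hC (hA.trans ha))

end traceNorm

theorem fidelity_mul_conjTranspose {N p r : ℕ} (P : Matrix (Fin N) (Fin p) ℂ)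
    (Q : Matrix (Fin N) (Fin r) ℂ) : fidelity (P * Pᴴ) (Q * Qᴴ) = traceNorm (Pᴴ * Q) := by
  have hσ := posSemidef_self_mul_conjTranspose Q
  set S := msqrt (Q * Qᴴ)
  have hSH : Sᴴ = S := (posSemidef_msqrt hσ).1
  have hSS : S * S = Q * Qᴴ := msqrt_mul_self hσ
  calc fidelity (P * Pᴴ) (Q * Qᴴ) = traceNorm (S * P)ᴴ := by
        rw [fidelity, traceNorm, conjTranspose_conjTranspose, conjTranspose_mul, hSH]
        simp only [S, Matrix.mul_assoc]
    _ = traceNorm (Pᴴ * Q)ᴴ := by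
        rw [traceNorm_conjTranspose, traceNorm, traceNorm, conjTranspose_conjTranspose,
          conjTranspose_mul, conjTranspose_mul, hSH, conjTranspose_conjTranspose]
        congr 3
        simp only [Matrix.mul_assoc, ← Matrix.mul_assoc S S, hSS]
    _ = traceNorm (Pᴴ * Q) := traceNorm_conjTranspose _

theorem stmt_19_general {N m : ℕ} (n : Fin (m + 1) → ℕ)
    (ψ : (i : Fin (m + 1)) → Fin (n i) → (Fin N → ℂ))
    (ρtil : Fin (m + 1) → Matrix (Fin N) (Fin N) ℂ)
    (hρtil : ∀ i, ρtil i = ∑ k, Matrix.vecMulVec (ψ i k) (star (ψ i k)))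
    (X Γ : Matrix ((i : Fin (m + 1)) × Fin (n i)) ((i : Fin (m + 1)) × Fin (n i)) ℂ)
    (hX : ∀ p q, X p q = star (ψ p.1 p.2) ⬝ᵥ ψ q.1 q.2)
    (hΓblock : ∀ p q, p.1 ≠ q.1 → Γ p q = 0)
    (hXΓ : (X - Γ).PosSemidef)
    (q : (i : Fin (m + 1)) → Fin (n i) → ℝ)
    (hq : ∀ i k, q i k = (star (ψ i k) ⬝ᵥ ψ i k).re)
    (γ : (i : Fin (m + 1)) → Fin (n i) → ℝ)
    (hγ : ∀ i k, γ i k = (Γ ⟨i, k⟩ ⟨i, k⟩).re) :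
    -- general fact: for a PSD block matrix, the trace norm of the off-diagonal
    -- block is bounded by √(Tr A · Tr C)
    (∀ (p r : ℕ) (A : Matrix (Fin p) (Fin p) ℂ) (B : Matrix (Fin p) (Fin r) ℂ)
        (C : Matrix (Fin r) (Fin r) ℂ),
      (Matrix.fromBlocks A B Bᴴ C).PosSemidef →
      ∀ a c : ℝ, A.trace.re ≤ a → C.trace.re ≤ c →
        (msqrt (Bᴴ * B)).trace.re ≤ Real.sqrt (a * c)) ∧
    -- in particular, the weighted residuals dominate the squared fidelity
    (∀ i j : Fin (m + 1), i ≠ j →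
      (∑ k, (q i k - γ i k)) * (∑ l, (q j l - γ j l)) ≥
        (fidelity (ρtil i) (ρtil j)) ^ 2) := by
  refine ⟨fun p r A B C h a c ha hc => traceNorm_le_sqrt_of_fromBlocks h ha hc, fun i j hij => ?_⟩
  have hoff : (X - Γ).submatrix (Sigma.mk i) (Sigma.mk j) = ((of (ψ i))ᵀ)ᴴ * (of (ψ j))ᵀ := by
    ext k l
    simp [conjTranspose_transpose_of_mul_transpose_of, hX, hΓblock ⟨i, k⟩ ⟨j, l⟩ hij]
  have htrace : ∀ i, ((X - Γ).submatrix (Sigma.mk i) (Sigma.mk i)).trace.re =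
      ∑ k, (q i k - γ i k) := by
    intro i
    simp [trace, hX, hq, hγ]
  have hblocks := hXΓ.fromBlocks_submatrix (Sigma.mk i) (Sigma.mk j)
  rw [hoff] at hblocks
  rw [hρtil, hρtil, sum_vecMulVec_star_eq, sum_vecMulVec_star_eq, fidelity_mul_conjTranspose,
    ← htrace, ← htrace]
  exact traceNorm_sq_le_of_fromBlocks hblocks

theorem stmt_19 {N m : ℕ} (n : Fin (m + 1) → ℕ)
    (ψ : (i : Fin (m + 1)) → Fin (n i) → (Fin N → ℂ))
    (ρtil : Fin (m + 1) → Matrix (Fin N) (Fin N) ℂ)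
    (hρtil : ∀ i, ρtil i = ∑ k, Matrix.vecMulVec (ψ i k) (star (ψ i k)))
    (X Γ : Matrix ((i : Fin (m + 1)) × Fin (n i)) ((i : Fin (m + 1)) × Fin (n i)) ℂ)
    (hX : ∀ p q, X p q = star (ψ p.1 p.2) ⬝ᵥ ψ q.1 q.2)
    (hΓblock : ∀ p q, p.1 ≠ q.1 → Γ p q = 0)
    (hΓ : Γ.PosSemidef) (hXΓ : (X - Γ).PosSemidef)
    (q : (i : Fin (m + 1)) → Fin (n i) → ℝ)
    (hq : ∀ i k, q i k = (star (ψ i k) ⬝ᵥ ψ i k).re)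
    (γ : (i : Fin (m + 1)) → Fin (n i) → ℝ)
    (hγ : ∀ i k, γ i k = (Γ ⟨i, k⟩ ⟨i, k⟩).re) :
    -- general fact: for a PSD block matrix, the trace norm of the off-diagonal
    -- block is bounded by √(Tr A · Tr C)
    (∀ (p r : ℕ) (A : Matrix (Fin p) (Fin p) ℂ) (B : Matrix (Fin p) (Fin r) ℂ)
        (C : Matrix (Fin r) (Fin r) ℂ),
      (Matrix.fromBlocks A B Bᴴ C).PosSemidef →
      ∀ a c : ℝ, A.trace.re ≤ a → C.trace.re ≤ c →
        (msqrt (Bᴴ * B)).trace.re ≤ Real.sqrt (a * c)) ∧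
    -- in particular, the weighted residuals dominate the squared fidelity
    (∀ i j : Fin (m + 1), i ≠ j →
      (∑ k, (q i k - γ i k)) * (∑ l, (q j l - γ j l)) ≥
        (fidelity (ρtil i) (ρtil j)) ^ 2) :=
  stmt_19_general n ψ ρtil hρtil X Γ hX hΓblock hXΓ q hq γ hγ
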